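/- Let A₁, …, Aₙ be effects on a complex separable Hilbert space H forming a partition of unity (A₁ + ⋯ + Aₙ = I) with ‖Aᵢ‖ = 1 for each i (as holds when the Aᵢ lie in the range of a POM with the norm-1-property). Then for every 1 ≤ i ≤ n there exists a sequence (ψ_k) of unit vectors in H such that for every effect B on H, the difference ⟨ψ_k, (Σ_{j=1}^n A_j^{1/2} B A_j^{1/2}) ψ_k⟩ − ⟨ψ_k, A_i^{1/2} B A_i^{1/2} ψ_k⟩ tends to 0 as k → ∞, where A^{1/2} denotes the positive square root of A. -/

import Mathlib

set_option maxHeartbeats 1000000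

open ContinuousLinearMap Filter
open scoped InnerProductSpace

/-- for a partition of unity into norm-one effects, the Lüders-type
channel is asymptotically reproduced by its `i`-th term on suitable states. -/
theorem partition_of_unity_lueders_limit
    {H : Type*} [NormedAddCommGroup H] [InnerProductSpace ℂ H] [CompleteSpace H]
    [TopologicalSpace.SeparableSpace H]
    (n : ℕ) (A : Fin n → (H →L[ℂ] H))
    (hpos : ∀ i, 0 ≤ A i) (hle : ∀ i, A i ≤ 1)
    (hsum : ∑ i, A i = 1)
    (hnorm : ∀ i, ‖A i‖ = 1) :
    ∀ i : Fin n, ∃ ψ : ℕ → H, (∀ k, ‖ψ k‖ = 1) ∧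
      ∀ B : H →L[ℂ] H, 0 ≤ B → B ≤ 1 →
        Tendsto (fun k =>
            ⟪ψ k, (∑ j, CFC.sqrt (A j) * B * CFC.sqrt (A j)) (ψ k)⟫_ℂ
              - ⟪ψ k, (CFC.sqrt (A i) * B * CFC.sqrt (A i)) (ψ k)⟫_ℂ)
          atTop (nhds 0) := by
  intro i
  -- choose nearly-norming unit vectors
  have hA : ∀ k : ℕ, ∃ x : H, ‖x‖ = 1 ∧ 1 - 1/((k:ℝ)+1) < ‖A i x‖ := by
    intro k
    have hk0 : (0:ℝ) < (k:ℝ) + 1 := by positivity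
    have hk1 : (0:ℝ) < 1/((k:ℝ)+1) := by positivity
    have hk2 : 1/((k:ℝ)+1) ≤ 1 := by rw [div_le_one hk0]; linarith [Nat.cast_nonneg (α := ℝ) k]
    have h1 : (1:ℝ) - 1/((k:ℝ)+1) < ‖A i‖ := by rw [hnorm i]; linarith
    obtain ⟨x, hx1, hx2⟩ := (A i).exists_lt_apply_of_lt_opNorm h1
    have hx0 : x ≠ 0 := by
      intro h
      rw [h, map_zero, norm_zero] at hx2
      linarith
    have hxn : 0 < ‖x‖ := norm_pos_iff.mpr hx0
    refine ⟨((‖x‖⁻¹ : ℝ) : ℂ) • x, ?_, ?_⟩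
    · rw [norm_smul]
      simp only [Complex.norm_real, Real.norm_eq_abs, abs_inv, abs_norm]
      rw [inv_mul_cancel₀ hxn.ne']
    · rw [map_smul, norm_smul]
      simp only [Complex.norm_real, Real.norm_eq_abs, abs_inv, abs_norm]
      have h1le : 1 ≤ ‖x‖⁻¹ := by
        nlinarith [mul_inv_cancel₀ hxn.ne', inv_nonneg.mpr (norm_nonneg x)]
      calc 1 - 1/((k:ℝ)+1) < ‖A i x‖ := hx2
        _ = 1 * ‖A i x‖ := (one_mul _).symm
        _ ≤ ‖x‖⁻¹ * ‖A i x‖ := by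
            exact mul_le_mul_of_nonneg_right h1le (norm_nonneg _)
  choose ψ hψ1 hψ2 using hA
  refine ⟨ψ, hψ1, ?_⟩
  intro B hB0 hB1
  -- self-adjointness of square roots
  have hsqpos : ∀ j, (0:H →L[ℂ] H) ≤ CFC.sqrt (A j) := fun j => CFC.sqrt_nonneg (A j)
  have hsa : ∀ j, IsSelfAdjoint (CFC.sqrt (A j)) :=
    fun j => (((nonneg_iff_isPositive _).mp (hsqpos j)).isSelfAdjoint)
  have hBpos := (nonneg_iff_isPositive B).mp hB0
  have hBreal := (isPositive_iff_complex B).mp hBpos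
  -- key rewriting of each term
  have hterm : ∀ j (x : H), ⟪x, (CFC.sqrt (A j) * B * CFC.sqrt (A j)) x⟫_ℂ
      = ⟪CFC.sqrt (A j) x, B (CFC.sqrt (A j) x)⟫_ℂ := by
    intro j x
    rw [ContinuousLinearMap.mul_apply, ContinuousLinearMap.mul_apply, ← ContinuousLinearMap.adjoint_inner_left,
      isSelfAdjoint_iff'.mp (hsa j)]
  have hsqnorm : ∀ j (x : H), ‖CFC.sqrt (A j) x‖^2 = RCLike.re ⟪x, A j x⟫_ℂ := by
    intro j x
    rw [← inner_self_eq_norm_sq (𝕜 := ℂ), ← ContinuousLinearMap.adjoint_inner_right,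
      isSelfAdjoint_iff'.mp (hsa j)]
    have : CFC.sqrt (A j) (CFC.sqrt (A j) x) = A j x := by
      rw [← ContinuousLinearMap.mul_apply, CFC.sqrt_mul_sqrt_self (A j) (hpos j)]
    rw [this]
  -- the per-k bound
  have hbound : ∀ k, ‖⟪ψ k, (∑ j, CFC.sqrt (A j) * B * CFC.sqrt (A j)) (ψ k)⟫_ℂ
      - ⟪ψ k, (CFC.sqrt (A i) * B * CFC.sqrt (A i)) (ψ k)⟫_ℂ‖
      ≤ 1 - (1 - 1/((k:ℝ)+1))^2 := by
    intro k
    set x := ψ k with hx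
    -- each term is a nonneg real ≤ re ⟪x, A j x⟫
    have hterm2 : ∀ j, ∃ r : ℝ, ⟪x, (CFC.sqrt (A j) * B * CFC.sqrt (A j)) x⟫_ℂ = (r:ℂ)
        ∧ 0 ≤ r ∧ r ≤ RCLike.re ⟪x, A j x⟫_ℂ := by
      intro j
      set y := CFC.sqrt (A j) x with hy
      obtain ⟨h1, h2⟩ := hBreal y
      have hyy : ⟪y, B y⟫_ℂ = ((RCLike.re ⟪B y, y⟫_ℂ : ℝ) : ℂ) := by
        rw [← inner_conj_symm, ← h1, Complex.conj_ofReal]; simp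
      refine ⟨RCLike.re ⟪B y, y⟫_ℂ, ?_, h2, ?_⟩
      · rw [hterm j x]; exact hyy
      · have hpos1 := (le_def B 1).mp hB1
        have h3 := hpos1.inner_nonneg_right y
        have h5 : (1 - B) y = y - B y := by simp
        rw [h5, inner_sub_right, RCLike.nonneg_iff, map_sub] at h3; replace h3 := h3.1
        have h4 : RCLike.re ⟪y, y⟫_ℂ = ‖y‖^2 := inner_self_eq_norm_sq y
        have h6 : RCLike.re ⟪y, B y⟫_ℂ = RCLike.re ⟪B y, y⟫_ℂ := by rw [hyy]; simp
        rw [← hsqnorm j x, ← h4]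
        linarith
    choose r hr1 hr2 hr3 using hterm2
    -- sum splits
    have hsplit : ⟪x, (∑ j, CFC.sqrt (A j) * B * CFC.sqrt (A j)) x⟫_ℂ
        = ∑ j, ⟪x, (CFC.sqrt (A j) * B * CFC.sqrt (A j)) x⟫_ℂ := by
      rw [ContinuousLinearMap.sum_apply, inner_sum]
    have hdiff : ⟪x, (∑ j, CFC.sqrt (A j) * B * CFC.sqrt (A j)) x⟫_ℂ
        - ⟪x, (CFC.sqrt (A i) * B * CFC.sqrt (A i)) x⟫_ℂ
        = ((∑ j ∈ Finset.univ.erase i, r j : ℝ) : ℂ) := by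
      rw [hsplit, ← Finset.add_sum_erase _ _ (Finset.mem_univ i)]
      push_cast
      rw [add_sub_cancel_left]
      exact Finset.sum_congr rfl (fun j _ => hr1 j)
    rw [hdiff]
    rw [Complex.norm_real]
    have hsum_r : ∑ j ∈ Finset.univ.erase i, r j
        ≤ ∑ j ∈ Finset.univ.erase i, RCLike.re ⟪x, A j x⟫_ℂ :=
      Finset.sum_le_sum (fun j _ => hr3 j)
    have hnonneg : 0 ≤ ∑ j ∈ Finset.univ.erase i, r j :=
      Finset.sum_nonneg (fun j _ => hr2 j)
    rw [Real.norm_of_nonneg hnonneg]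
    -- ∑_{j≠i} re⟪x, A j x⟫ = 1 - re⟪x, A i x⟫
    have hsum2 : ∑ j, RCLike.re ⟪x, A j x⟫_ℂ = 1 := by
      have : ∑ j, ⟪x, A j x⟫_ℂ = ⟪x, x⟫_ℂ := by
        rw [← inner_sum, ← ContinuousLinearMap.sum_apply, hsum, ContinuousLinearMap.one_apply]
      have h2 : RCLike.re (∑ j, ⟪x, A j x⟫_ℂ) = RCLike.re ⟪x, x⟫_ℂ := by rw [this]
      rw [map_sum] at h2
      rw [h2, inner_self_eq_norm_sq, hψ1 k]
      norm_num
    have hsum3 : ∑ j ∈ Finset.univ.erase i, RCLike.re ⟪x, A j x⟫_ℂ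
        = 1 - RCLike.re ⟪x, A i x⟫_ℂ := by
      rw [← hsum2, ← Finset.add_sum_erase _ _ (Finset.mem_univ i)]
      ring
    -- re⟪x, A i x⟫ ≥ ‖A i x‖²
    have hAi : ‖A i x‖^2 ≤ RCLike.re ⟪x, A i x⟫_ℂ := by
      rw [← hsqnorm i x]
      have h1 : ‖A i x‖ ≤ ‖CFC.sqrt (A i) x‖ := by
        have : A i x = CFC.sqrt (A i) (CFC.sqrt (A i) x) := by
          rw [← ContinuousLinearMap.mul_apply, CFC.sqrt_mul_sqrt_self (A i) (hpos i)]
        rw [this]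
        calc ‖CFC.sqrt (A i) (CFC.sqrt (A i) x)‖
            ≤ ‖CFC.sqrt (A i)‖ * ‖CFC.sqrt (A i) x‖ := (CFC.sqrt (A i)).le_opNorm _
          _ ≤ 1 * ‖CFC.sqrt (A i) x‖ := by
              have hn : ‖CFC.sqrt (A i)‖ ≤ 1 := by
                have hcs : ‖CFC.sqrt (A i)‖ * ‖CFC.sqrt (A i)‖ = 1 := by
                  have := CStarRing.norm_star_mul_self (x := CFC.sqrt (A i))
                  rw [(hsa i).star_eq, CFC.sqrt_mul_sqrt_self (A i) (hpos i), hnorm i] at this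
                  linarith
                nlinarith [norm_nonneg (CFC.sqrt (A i))]
              exact mul_le_mul_of_nonneg_right hn (norm_nonneg _)
          _ = ‖CFC.sqrt (A i) x‖ := one_mul _
      exact pow_le_pow_left₀ (norm_nonneg _) h1 2
    have hlow : (1 - 1/((k:ℝ)+1))^2 ≤ ‖A i x‖^2 := by
      have hk0 : (0:ℝ) < (k:ℝ) + 1 := by positivity
      have hk2 : 1/((k:ℝ)+1) ≤ 1 := by rw [div_le_one hk0]; linarith [Nat.cast_nonneg (α := ℝ) k]
      exact pow_le_pow_left₀ (by linarith) (hψ2 k).le 2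
    calc ∑ j ∈ Finset.univ.erase i, r j
        ≤ 1 - RCLike.re ⟪x, A i x⟫_ℂ := by rw [← hsum3]; exact hsum_r
      _ ≤ 1 - ‖A i x‖^2 := by linarith
      _ ≤ 1 - (1 - 1/((k:ℝ)+1))^2 := by linarith
  -- squeeze
  have hg : Tendsto (fun k : ℕ => 1 - (1 - 1/((k:ℝ)+1))^2) atTop (nhds 0) := by
    have h1 := tendsto_one_div_add_atTop_nhds_zero_nat (𝕜 := ℝ)
    have h2 : Tendsto (fun k : ℕ => (1 - 1/((k:ℝ)+1))^2) atTop (nhds 1) := by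
      have := ((h1.const_sub 1).pow 2)
      simpa using this
    have := h2.const_sub 1
    simpa using this
  exact squeeze_zero_norm hbound hg
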